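/- arXiv:1412.1060 — 5 statements merged into one kernel-verified Lean document; each statement's English description precedes it below -/
import Mathlib

section
/- Let V ⊆ ℂ^d be a set of n points and V^ℓ ⊆ ℂ^{dℓ} its ℓ-fold Cartesian product. If H ⊆ ℂ^{dℓ} is an affine hyperplane with |H ∩ V^ℓ| ≥ δ·n^ℓ for some δ > 0, then there exists an affine hyperplane H' ⊆ ℂ^d with |H' ∩ V| ≥ δ·n. -/
/-!
Some coordinate slot `j` of `φ` restricts to a nonzero functional `ψ` on `ℂ^d`. Once the
other `ℓ - 1` coordinates of a point of `H ∩ V^ℓ` are fixed, its `j`-th coordinate lies in a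
fixed level set of `ψ`. Hence `|H ∩ V^ℓ| ≤ n^(ℓ-1) · max_c |V ∩ {ψ = c}|`, and the fullest
level set of `ψ` is the required hyperplane.
-/

open Finset Function

theorem card_piFinset_update_singleton {ι α : Type*} [DecidableEq ι] [Fintype ι]
    (V : Finset α) (j : ι) (a : α) :
    #(Fintype.piFinset (update (fun _ ↦ V) j {a})) = #V ^ (Fintype.card ι - 1) := by
  rw [Fintype.card_piFinset]
  calc ∏ i, #(update (fun _ ↦ V) j {a} i) = ∏ i, update (fun _ ↦ #V) j 1 i :=
        Fintype.prod_congr _ _ fun i ↦ by rcases eq_or_ne i j with rfl | hij <;> simp [*]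
    _ = _ := by simp [prod_update_of_mem, card_sdiff]

theorem update_eq_update_zero_add_single {ι M : Type*} [DecidableEq ι] [AddZeroClass M]
    (x : ι → M) (j : ι) (v : M) :
    update x j v = update x j 0 + Pi.single j v := by
  ext i
  rcases eq_or_ne i j with rfl | hij <;> simp [*]

theorem card_filter_piFinset_map_eq_le {ι M N : Type*} [DecidableEq ι] [Fintype ι]
    [AddCommMonoid M] [DecidableEq M] [AddCommGroup N] [DecidableEq N]
    (φ : (ι → M) →+ N) (V : Finset M) (j : ι) (b : N) (K : ℕ)
    (hK : ∀ c, #{v ∈ V | φ (Pi.single j v) = c} ≤ K) :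
    #{x ∈ Fintype.piFinset fun _ ↦ V | φ x = b} ≤ K * #V ^ (Fintype.card ι - 1) := by
  -- Fibre by zeroing the `j`-th coordinate; on a fibre, `x ↦ x j` injects into a level set.
  rw [← card_piFinset_update_singleton V j 0]
  refine card_le_mul_card_image_of_maps_to (f := fun x ↦ update x j 0) ?_ K fun y _ ↦ ?_
  · intro x hx
    simp only [mem_filter, Fintype.mem_piFinset] at hx ⊢
    intro i
    rcases eq_or_ne i j with rfl | hij <;> simp [*]
  refine (card_le_card_of_injOn (· j) ?_ ?_).trans (hK (b - φ y))
  · rintro x hx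
    simp only [coe_filter, mem_filter, Fintype.mem_piFinset, Set.mem_ofPred_eq] at hx ⊢
    obtain ⟨⟨hxV, hxb⟩, rfl⟩ := hx
    refine ⟨hxV j, ?_⟩
    rw [← hxb, eq_sub_iff_add_eq, add_comm, ← map_add, ← update_eq_update_zero_add_single,
      update_eq_self]
  · have hrecover : ∀ x, update x j 0 = y → x = update y j (x j) := fun x hx ↦ by
      rw [← hx, update_idem, update_eq_self]
    rintro x hx x' hx' (hxx' : x j = x' j)
    simp only [coe_filter, Set.mem_ofPred_eq] at hx hx'
    rw [hrecover x hx.2, hrecover x' hx'.2, hxx']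

theorem exists_max_card_filter_eq {α β : Type*} [Nonempty β] [DecidableEq β] (V : Finset α)
    (f : α → β) : ∃ c, ∀ c', #{v ∈ V | f v = c'} ≤ #{v ∈ V | f v = c} := by
  have hbdd : BddAbove (Set.range fun c ↦ #{v ∈ V | f v = c}) :=
    ⟨#V, by rintro _ ⟨c, rfl⟩; exact card_filter_le _ _⟩
  obtain ⟨c, hc⟩ := Nat.sSup_mem (Set.range_nonempty _) hbdd
  exact ⟨c, fun c' ↦ (le_csSup hbdd ⟨c', rfl⟩).trans_eq hc.symm⟩

theorem LinearMap.exists_comp_single_ne_zero {R ι M N : Type*} [Semiring R] [DecidableEq ι]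
    [Finite ι] [AddCommMonoid M] [Module R M] [AddCommMonoid N] [Module R N]
    {φ : (ι → M) →ₗ[R] N} (hφ : φ ≠ 0) : ∃ j, φ ∘ₗ LinearMap.single R (fun _ ↦ M) j ≠ 0 := by
  by_contra! h
  exact hφ (LinearMap.pi_ext' fun j ↦ by simp [h j])

theorem stmt1_general (d ℓ : ℕ) (V : Finset (Fin d → ℂ)) (δ : ℝ)
    (φ : (Fin ℓ → Fin d → ℂ) →ₗ[ℂ] ℂ) (hφ : φ ≠ 0) (b : ℂ)
    (h : (Set.ncard {x : Fin ℓ → Fin d → ℂ | (∀ j, x j ∈ V) ∧ φ x = b} : ℝ)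
        ≥ δ * (V.card : ℝ) ^ ℓ) :
    ∃ (ψ : (Fin d → ℂ) →ₗ[ℂ] ℂ) (c : ℂ), ψ ≠ 0 ∧
      (Set.ncard {v : Fin d → ℂ | v ∈ V ∧ ψ v = c} : ℝ) ≥ δ * (V.card : ℝ) := by
  classical
  obtain ⟨j, hψ⟩ := φ.exists_comp_single_ne_zero hφ
  set ψ := φ ∘ₗ LinearMap.single ℂ _ j
  obtain ⟨c, hc⟩ := exists_max_card_filter_eq V ψ
  have hcount := card_filter_piFinset_map_eq_le φ.toAddMonoidHom V j b _ hc
  rw [Fintype.card_fin] at hcount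
  refine ⟨ψ, c, hψ, ?_⟩
  have hset : {x : Fin ℓ → Fin d → ℂ | (∀ j, x j ∈ V) ∧ φ x = b} =
      ↑({x ∈ Fintype.piFinset fun _ : Fin ℓ ↦ V | φ x = b}) := by
    ext; simp
  have hset' : {v | v ∈ V ∧ ψ v = c} = ↑({v ∈ V | ψ v = c}) := by
    ext; simp
  rw [hset, Set.ncard_coe_finset] at h
  rw [hset', Set.ncard_coe_finset]
  rcases (#V).eq_zero_or_pos with hV | hV
  · simp [hV]
  have hpos : (0 : ℝ) < #V ^ (ℓ - 1) := by positivity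
  refine le_of_mul_le_mul_right ?_ hpos
  calc δ * #V * #V ^ (ℓ - 1) = δ * #V ^ ℓ := by
        rw [mul_assoc, ← pow_succ', Nat.sub_add_cancel j.pos]
    _ ≤ _ := h
    _ ≤ _ := by exact_mod_cast hcount

/-- If an affine hyperplane `H ⊆ ℂ^{dℓ}` contains at least `δ·n^ℓ` points of the
`ℓ`-fold product `V^ℓ` of an `n`-point set `V ⊆ ℂ^d`, then some affine hyperplane
`H' ⊆ ℂ^d` contains at least `δ·n` points of `V`. -/
theorem stmt1 (d ℓ : ℕ) (V : Finset (Fin d → ℂ)) (δ : ℝ) (hδ : 0 < δ)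
    (φ : (Fin ℓ → Fin d → ℂ) →ₗ[ℂ] ℂ) (hφ : φ ≠ 0) (b : ℂ)
    (h : (Set.ncard {x : Fin ℓ → Fin d → ℂ | (∀ j, x j ∈ V) ∧ φ x = b} : ℝ)
        ≥ δ * (V.card : ℝ) ^ ℓ) :
    ∃ (ψ : (Fin d → ℂ) →ₗ[ℂ] ℂ) (c : ℂ), ψ ≠ 0 ∧
      (Set.ncard {v : Fin d → ℂ | v ∈ V ∧ ψ v = c} : ℝ) ≥ δ * (V.card : ℝ) :=
  stmt1_general d ℓ V δ φ hφ b h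
end

section
/- Let G = (A ⊔ B, E) be a finite bipartite graph with nonempty edge set E ⊆ A × B. Then there exist nonempty subsets A' ⊆ A and B' ⊆ B such that in the induced bipartite subgraph G' = (A' ⊔ B', E'): every vertex of A' has degree at least |E|/(4|A|), every vertex of B' has degree at least |E|/(4|B|), and |E'| ≥ |E|/2. -/
set_option maxHeartbeats 1000000 in
/-- Bipartite graph refinement: any finite bipartite graph with nonempty edge set
`E ⊆ A × B` has an induced subgraph on nonempty `A' ⊆ A`, `B' ⊆ B` where every
vertex of `A'` has degree at least `|E|/(4|A|)`, every vertex of `B'` has degree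
at least `|E|/(4|B|)`, and at least half the edges survive. -/
theorem stmt2 {α β : Type*} [DecidableEq α] [DecidableEq β]
    (A : Finset α) (B : Finset β) (E : Finset (α × β))
    (hE : E ⊆ A ×ˢ B) (hne : E.Nonempty) :
    ∃ (A' : Finset α) (B' : Finset β), A' ⊆ A ∧ B' ⊆ B ∧
      A'.Nonempty ∧ B'.Nonempty ∧
      (∀ a ∈ A',
        ((E.filter fun e => e.1 = a ∧ e.1 ∈ A' ∧ e.2 ∈ B').card : ℝ)
          ≥ (E.card : ℝ) / (4 * A.card)) ∧
      (∀ b ∈ B',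
        ((E.filter fun e => e.2 = b ∧ e.1 ∈ A' ∧ e.2 ∈ B').card : ℝ)
          ≥ (E.card : ℝ) / (4 * B.card)) ∧
      ((E.filter fun e => e.1 ∈ A' ∧ e.2 ∈ B').card : ℝ) ≥ (E.card : ℝ) / 2 := by
  have hEcard : (0 : ℝ) < E.card := by
    exact_mod_cast Finset.card_pos.mpr hne
  have hA : A.Nonempty := by
    obtain ⟨e, he⟩ := hne; exact ⟨e.1, (Finset.mem_product.mp (hE he)).1⟩
  have hB : B.Nonempty := by
    obtain ⟨e, he⟩ := hne; exact ⟨e.2, (Finset.mem_product.mp (hE he)).2⟩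
  have hAcard : (0 : ℝ) < A.card := by exact_mod_cast Finset.card_pos.mpr hA
  have hBcard : (0 : ℝ) < B.card := by exact_mod_cast Finset.card_pos.mpr hB
  set a : ℝ := (E.card : ℝ) / (4 * A.card) with ha
  set b : ℝ := (E.card : ℝ) / (4 * B.card) with hb
  have hapos : 0 < a := div_pos hEcard (by positivity)
  have hbpos : 0 < b := div_pos hEcard (by positivity)
  set f : Finset α × Finset β → ℝ := fun p =>
    ((E.filter fun e => e.1 ∈ p.1 ∧ e.2 ∈ p.2).card : ℝ) - a * p.1.card - b * p.2.card
    with hf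
  obtain ⟨p, hpmem, hpmax⟩ := (A.powerset ×ˢ B.powerset).exists_max_image f
    ⟨(A, B), Finset.mem_product.mpr ⟨Finset.mem_powerset_self A, Finset.mem_powerset_self B⟩⟩
  obtain ⟨A', B'⟩ := p
  obtain ⟨hA'sub, hB'sub⟩ := Finset.mem_product.mp hpmem
  rw [Finset.mem_powerset] at hA'sub hB'sub
  -- value at (A, B)
  have hfull : (E.filter fun e => e.1 ∈ A ∧ e.2 ∈ B) = E := by
    apply Finset.filter_true_of_mem
    intro e he
    exact Finset.mem_product.mp (hE he)
  have hfAB : f (A, B) = (E.card : ℝ) / 2 := by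
    simp only [hf, hfull]
    rw [ha, hb]
    field_simp
    ring
  have hmaxval : (E.card : ℝ) / 2 ≤ f (A', B') := by
    rw [← hfAB]
    exact hpmax (A, B)
      (Finset.mem_product.mpr ⟨Finset.mem_powerset_self A, Finset.mem_powerset_self B⟩)
  simp only [hf] at hmaxval
  have hE'ge : ((E.filter fun e => e.1 ∈ A' ∧ e.2 ∈ B').card : ℝ) ≥ (E.card : ℝ) / 2 := by
    have h2 : 0 ≤ a * A'.card := by positivity
    have h3 : 0 ≤ b * B'.card := by positivity
    linarith
  have hE'ne : (E.filter fun e => e.1 ∈ A' ∧ e.2 ∈ B').Nonempty := by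
    rw [← Finset.card_pos]
    have : (0 : ℝ) < ((E.filter fun e => e.1 ∈ A' ∧ e.2 ∈ B').card : ℝ) := by linarith
    exact_mod_cast this
  obtain ⟨e0, he0⟩ := hE'ne
  have he0' := Finset.mem_filter.mp he0
  have hA'ne : A'.Nonempty := ⟨e0.1, he0'.2.1⟩
  have hB'ne : B'.Nonempty := ⟨e0.2, he0'.2.2⟩
  refine ⟨A', B', hA'sub, hB'sub, hA'ne, hB'ne, ?_, ?_, hE'ge⟩
  · -- degree in A'
    intro a0 ha0
    by_contra hlt
    push_neg at hlt
    -- compare with erasing a0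
    have hsplit : (E.filter fun e => e.1 ∈ A' ∧ e.2 ∈ B').card
        = (E.filter fun e => e.1 = a0 ∧ e.1 ∈ A' ∧ e.2 ∈ B').card
          + (E.filter fun e => e.1 ∈ A'.erase a0 ∧ e.2 ∈ B').card := by
      rw [← Finset.card_union_of_disjoint]
      · congr 1
        ext e
        simp only [Finset.mem_union, Finset.mem_filter, Finset.mem_erase]
        constructor
        · rintro ⟨heE, h1, h2⟩
          by_cases h : e.1 = a0
          · exact Or.inl ⟨heE, h, h1, h2⟩
          · exact Or.inr ⟨heE, ⟨h, h1⟩, h2⟩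
        · rintro (⟨heE, h, h1, h2⟩ | ⟨heE, ⟨_, h1⟩, h2⟩)
          · exact ⟨heE, h1, h2⟩
          · exact ⟨heE, h1, h2⟩
      · rw [Finset.disjoint_left]
        intro e he1 he2
        simp only [Finset.mem_filter, Finset.mem_erase] at he1 he2
        exact he2.2.1.1 he1.2.1
    have hcmp := hpmax (A'.erase a0, B')
      (Finset.mem_product.mpr ⟨Finset.mem_powerset.mpr ((Finset.erase_subset _ _).trans hA'sub),
        Finset.mem_powerset.mpr hB'sub⟩)
    simp only [hf] at hcmp
    have hcard : ((A'.erase a0).card : ℝ) = (A'.card : ℝ) - 1 := by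
      rw [Finset.card_erase_of_mem ha0]
      have : 1 ≤ A'.card := Finset.card_pos.mpr ⟨a0, ha0⟩
      push_cast [Nat.cast_sub this]
      ring
    have hsplit' : ((E.filter fun e => e.1 ∈ A' ∧ e.2 ∈ B').card : ℝ)
        = ((E.filter fun e => e.1 = a0 ∧ e.1 ∈ A' ∧ e.2 ∈ B').card : ℝ)
          + ((E.filter fun e => e.1 ∈ A'.erase a0 ∧ e.2 ∈ B').card : ℝ) := by
      exact_mod_cast hsplit
    rw [hcard] at hcmp
    rw [ha] at hlt
    linarith
  · -- degree in B'
    intro b0 hb0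
    by_contra hlt
    push_neg at hlt
    have hsplit : (E.filter fun e => e.1 ∈ A' ∧ e.2 ∈ B').card
        = (E.filter fun e => e.2 = b0 ∧ e.1 ∈ A' ∧ e.2 ∈ B').card
          + (E.filter fun e => e.1 ∈ A' ∧ e.2 ∈ B'.erase b0).card := by
      rw [← Finset.card_union_of_disjoint]
      · congr 1
        ext e
        simp only [Finset.mem_union, Finset.mem_filter, Finset.mem_erase]
        constructor
        · rintro ⟨heE, h1, h2⟩
          by_cases h : e.2 = b0
          · exact Or.inl ⟨heE, h, h1, h2⟩
          · exact Or.inr ⟨heE, h1, h, h2⟩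
        · rintro (⟨heE, h, h1, h2⟩ | ⟨heE, h1, _, h2⟩)
          · exact ⟨heE, h1, h2⟩
          · exact ⟨heE, h1, h2⟩
      · rw [Finset.disjoint_left]
        intro e he1 he2
        simp only [Finset.mem_filter, Finset.mem_erase] at he1 he2
        exact he2.2.2.1 he1.2.1
    have hcmp := hpmax (A', B'.erase b0)
      (Finset.mem_product.mpr ⟨Finset.mem_powerset.mpr hA'sub,
        Finset.mem_powerset.mpr ((Finset.erase_subset _ _).trans hB'sub)⟩)
    simp only [hf] at hcmp
    have hcard : ((B'.erase b0).card : ℝ) = (B'.card : ℝ) - 1 := by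
      rw [Finset.card_erase_of_mem hb0]
      have : 1 ≤ B'.card := Finset.card_pos.mpr ⟨b0, hb0⟩
      push_cast [Nat.cast_sub this]
      ring
    have hsplit' : ((E.filter fun e => e.1 ∈ A' ∧ e.2 ∈ B').card : ℝ)
        = ((E.filter fun e => e.2 = b0 ∧ e.1 ∈ A' ∧ e.2 ∈ B').card : ℝ)
          + ((E.filter fun e => e.1 ∈ A' ∧ e.2 ∈ B'.erase b0).card : ℝ) := by
      exact_mod_cast hsplit
    rw [hcard] at hcmp
    rw [hb] at hlt
    linarith
end

section
/- Suppose v_1, ..., v_{r+2} ∈ ℂ^d are distinct collinear points, and let φ = φ_{d,r} : ℂ^d → ℂ^{m(d,r)} be the Veronese embedding of degree r. Then the images φ(v_1), ..., φ(v_{r+2}) are linearly dependent. -/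
/-- Index type for the coordinates of the degree-`r` Veronese embedding in `d`
variables: exponent vectors of total degree at most `r`. -/
def VerIdx (d r : ℕ) : Type := {s : Fin d → Fin (r + 1) // (∑ i, (s i : ℕ)) ≤ r}

/-- The Veronese embedding `φ_{d,r} : ℂ^d → ℂ^{m(d,r)}`. -/
def veronese (d r : ℕ) (a : Fin d → ℂ) : VerIdx d r → ℂ :=
  fun s => ∏ i, a i ^ (s.1 i : ℕ)

/-- The images under the degree-`r` Veronese embedding of `r+2` distinct collinear
points of `ℂ^d` are linearly dependent. -/
theorem stmt4 (d r : ℕ) (v : Fin (r + 2) → (Fin d → ℂ))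
    (hinj : Function.Injective v) (hcol : Collinear ℂ (Set.range v)) :
    ¬ LinearIndependent ℂ (fun i => veronese d r (v i)) := by
  intro hLI
  obtain ⟨u, hu⟩ := (collinear_iff_of_mem (Set.mem_range_self 0)).1 hcol
  choose t ht using fun i => hu (v i) (Set.mem_range_self i)
  -- the moment vectors in ℂ^{r+1}
  set w : Fin (r + 2) → (Fin (r + 1) → ℂ) := fun i k => t i ^ (k : ℕ) with hw
  have hnotLI : ¬ LinearIndependent ℂ w := by
    intro h
    have hcard := h.fintype_card_le_finrank
    simp [Module.finrank_fintype_fun_eq_card] at hcard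
  rw [Fintype.not_linearIndependent_iff] at hnotLI
  obtain ⟨c, hcsum, j, hj⟩ := hnotLI
  have hmom : ∀ k : ℕ, k < r + 1 → ∑ i, c i * t i ^ k = 0 := by
    intro k hk
    have := congrFun hcsum ⟨k, hk⟩
    simpa [hw] using this
  have hzero : ∑ i, c i • veronese d r (v i) = 0 := by
    funext s
    have key : ∀ i, veronese d r (v i) s =
        (∏ j : Fin d, ((Polynomial.C (v 0 j)) + (Polynomial.C (u j)) * Polynomial.X)
          ^ (s.1 j : ℕ)).eval (t i) := by
      intro i
      simp only [veronese, Polynomial.eval_prod, Polynomial.eval_pow, Polynomial.eval_add,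
        Polynomial.eval_mul, Polynomial.eval_C, Polynomial.eval_X]
      refine Finset.prod_congr rfl fun j _ => ?_
      have : v i j = t i • u j + v 0 j := by
        rw [ht i]; rfl
      rw [this, smul_eq_mul]
      ring
    set P : Polynomial ℂ := ∏ j : Fin d,
      ((Polynomial.C (v 0 j)) + (Polynomial.C (u j)) * Polynomial.X) ^ (s.1 j : ℕ) with hP
    have hdeg : P.natDegree < r + 1 := by
      have h1 : P.natDegree ≤ ∑ j : Fin d, (s.1 j : ℕ) := by
        refine le_trans (Polynomial.natDegree_prod_le _ _) (Finset.sum_le_sum fun j _ => ?_)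
        refine le_trans (Polynomial.natDegree_pow_le) ?_
        have : ((Polynomial.C (v 0 j)) + (Polynomial.C (u j)) * Polynomial.X).natDegree ≤ 1 := by
          refine le_trans (Polynomial.natDegree_add_le _ _) ?_
          simp [Polynomial.natDegree_C_mul_le]
          exact le_trans (Polynomial.natDegree_mul_le) (by simp)
        calc (s.1 j : ℕ) * _ ≤ (s.1 j : ℕ) * 1 := Nat.mul_le_mul_left _ this
          _ = (s.1 j : ℕ) := Nat.mul_one _
      exact lt_of_le_of_lt (le_trans h1 s.2) (Nat.lt_succ_self r)
    simp only [Finset.sum_apply, Pi.smul_apply, smul_eq_mul, Pi.zero_apply]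
    calc ∑ i, c i * veronese d r (v i) s
        = ∑ i, c i * ∑ k ∈ Finset.range (r + 1), P.coeff k * t i ^ k := by
          refine Finset.sum_congr rfl fun i _ => ?_
          rw [key i, Polynomial.eval_eq_sum_range' hdeg]
      _ = ∑ k ∈ Finset.range (r + 1), P.coeff k * ∑ i, c i * t i ^ k := by
          simp_rw [Finset.mul_sum]
          rw [Finset.sum_comm]
          refine Finset.sum_congr rfl fun k _ => ?_
          refine Finset.sum_congr rfl fun i _ => by ring
      _ = 0 := by
          refine Finset.sum_eq_zero fun k hk => ?_
          rw [hmom k (Finset.mem_range.1 hk), mul_zero]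
  exact hj ((Fintype.linearIndependent_iff.1 hLI c hzero) j)
end

section
/- Suppose that for a finite set V of n points in ℝ³ and sets of lines, the Guth–Katz incidence bound holds: for any finite set L of m lines in ℝ³ with at most q₂ lines of L contained in any single plane, I(V, L) ≤ K·(n^{1/2}m^{3/4} + n^{2/3}m^{1/3}q₂^{1/3} + n + m). Also suppose the planar bound |L_r(W)| ≤ K·(|W|²/r³ + |W|/r) for point sets W in any 2-flat. Then, letting s₂ be the maximum number of points of V contained in a 2-flat, for all r ≥ 2: |L_r(V)| ≤ K'·(n²/r⁴ + n·s₂/r³ + n/r) for a constant K' depending only on K. -/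
/-!
Let `L = L_r(V)` and `m = |L|`. A line of `L` lying in a plane `P` is `r`-rich for `V ∩ P`,
which has at most `s₂` points, so the planar bound caps the number of lines of `L` in a plane
by `q₂ ≈ K (s₂²/r³ + s₂/r)`. Every line of `L` carries at least `r` points of `V`, so
`r m ≤ I(V, L)`, and by the Guth–Katz bound `r m` is at most `4K` times one of its four terms.
Solving for `m` in each case: the term `n^{1/2} m^{3/4}` gives `m ≲ n²/r⁴`; the term
`n^{2/3} m^{1/3} q₂^{1/3}` gives `m² ≲ n² q₂ / r³ ≲ (n s₂/r³ + n/r)²`; the term `n` gives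
`m ≲ n/r`; and the term `m` forces `r ≤ 4K`, where the bound `m ≤ n²` (two points determine
a line) suffices.
-/

/-- `L` is an affine line in `ℝ³`. -/
def IsLineR (L : Set (Fin 3 → ℝ)) : Prop :=
  ∃ a b : Fin 3 → ℝ, b ≠ 0 ∧ L = {p | ∃ t : ℝ, p = a + t • b}

/-- `P` is a 2-flat (affine plane) in `ℝ³`. -/
def IsPlaneR (P : Set (Fin 3 → ℝ)) : Prop :=
  ∃ a b c : Fin 3 → ℝ, LinearIndependent ℝ ![b, c] ∧
    P = {p | ∃ s t : ℝ, p = a + s • b + t • c}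

/-- The set of `r`-rich lines of a point set `W ⊆ ℝ³`. -/
def richLinesR (r : ℕ) (W : Set (Fin 3 → ℝ)) : Set (Set (Fin 3 → ℝ)) :=
  {L | IsLineR L ∧ r ≤ (L ∩ W).ncard}

/-- The number of incidences between a point set and a set of lines. -/
noncomputable def incidences (W : Set (Fin 3 → ℝ)) (L : Set (Set (Fin 3 → ℝ))) : ℕ :=
  Set.ncard {pl : (Fin 3 → ℝ) × Set (Fin 3 → ℝ) | pl.1 ∈ W ∧ pl.2 ∈ L ∧ pl.1 ∈ pl.2}

theorem setOf_add_smul_eq_range_lineMap {k E : Type*} [Field k] [AddCommGroup E] [Module k E]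
    {a b : E} {t₁ t₂ : k} (h : a + t₁ • b ≠ a + t₂ • b) :
    {x | ∃ t : k, x = a + t • b} =
      Set.range (AffineMap.lineMap (a + t₁ • b) (a + t₂ • b) : k → E) := by
  have ht : t₂ - t₁ ≠ 0 := sub_ne_zero.mpr fun h' => h (by rw [h'])
  have hreparam : (AffineMap.lineMap (a + t₁ • b) (a + t₂ • b) : k → E) =
      (fun t => a + t • b) ∘ fun c : k => t₁ + c * (t₂ - t₁) := by
    ext c
    simp only [AffineMap.lineMap_apply_module', Function.comp_apply]
    module
  have hsurj : Function.Surjective fun c : k => t₁ + c * (t₂ - t₁) := fun t =>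
    ⟨(t - t₁) / (t₂ - t₁), by field_simp; ring⟩
  rw [hreparam, hsurj.range_comp]
  ext x
  simp only [Set.mem_ofPred_eq, Set.mem_range, eq_comm]

theorem IsLineR.eq_range_lineMap {L : Set (Fin 3 → ℝ)} (hL : IsLineR L) {p q : Fin 3 → ℝ}
    (hp : p ∈ L) (hq : q ∈ L) (hpq : p ≠ q) : L = Set.range (AffineMap.lineMap p q : ℝ → _) := by
  obtain ⟨a, b, -, rfl⟩ := hL
  obtain ⟨t₁, rfl⟩ := hp
  obtain ⟨t₂, rfl⟩ := hq
  exact setOf_add_smul_eq_range_lineMap hpq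

theorem richLinesR_subset_image_lineMap {r : ℕ} (hr : 2 ≤ r) (W : Set (Fin 3 → ℝ)) :
    richLinesR r W ⊆
      (fun pq : (Fin 3 → ℝ) × (Fin 3 → ℝ) => Set.range (AffineMap.lineMap pq.1 pq.2 : ℝ → _)) ''
        (W ×ˢ W) := by
  rintro ℓ ⟨hℓ, hrich⟩
  obtain ⟨⟨p, hp, q, hq, hpq⟩, -⟩ :=
    Set.one_lt_ncard_iff_nontrivial_and_finite.mp (show 1 < (ℓ ∩ W).ncard by omega)
  exact ⟨(p, q), ⟨hp.2, hq.2⟩, (hℓ.eq_range_lineMap hp.1 hq.1 hpq).symm⟩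

theorem richLinesR_finite {r : ℕ} (hr : 2 ≤ r) {W : Set (Fin 3 → ℝ)} (hW : W.Finite) :
    (richLinesR r W).Finite :=
  ((hW.prod hW).image _).subset (richLinesR_subset_image_lineMap hr W)

theorem ncard_richLinesR_le_sq {r : ℕ} (hr : 2 ≤ r) {W : Set (Fin 3 → ℝ)} (hW : W.Finite) :
    (richLinesR r W).ncard ≤ W.ncard ^ 2 :=
  calc (richLinesR r W).ncard
      ≤ ((fun pq : (Fin 3 → ℝ) × (Fin 3 → ℝ) => Set.range (AffineMap.lineMap pq.1 pq.2 : ℝ → _)) ''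
          (W ×ˢ W)).ncard :=
        Set.ncard_le_ncard (richLinesR_subset_image_lineMap hr W) ((hW.prod hW).image _)
    _ ≤ (W ×ˢ W).ncard := Set.ncard_image_le (hW.prod hW)
    _ = W.ncard ^ 2 := by rw [Set.ncard_prod, sq]

theorem richLinesR_sep_subset_inter (r : ℕ) (W P : Set (Fin 3 → ℝ)) :
    {ℓ ∈ richLinesR r W | ℓ ⊆ P} ⊆ richLinesR r (W ∩ P) := by
  rintro ℓ ⟨⟨hℓ, hrich⟩, hℓP⟩
  refine ⟨hℓ, ?_⟩
  rwa [← Set.inter_assoc, Set.inter_eq_left.mpr (Set.inter_subset_left.trans hℓP)]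

theorem incidences_eq_sum_ncard {V : Set (Fin 3 → ℝ)} {L : Set (Set (Fin 3 → ℝ))}
    (hV : V.Finite) (hL : L.Finite) :
    incidences V L = ∑ ℓ ∈ hL.toFinset, (ℓ ∩ V).ncard := by
  classical
  have hI : {pl : (Fin 3 → ℝ) × Set (Fin 3 → ℝ) | pl.1 ∈ V ∧ pl.2 ∈ L ∧ pl.1 ∈ pl.2} =
      ↑((hV.toFinset ×ˢ hL.toFinset).filter fun pl => pl.1 ∈ pl.2) := by
    ext pl
    simp [and_assoc]
  have hfiber : ∀ ℓ : Set (Fin 3 → ℝ), (ℓ ∩ V).ncard = (hV.toFinset.filter (· ∈ ℓ)).card := by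
    intro ℓ
    rw [← Set.ncard_coe_finset]
    congr 1
    ext x
    simp [and_comm]
  rw [incidences, hI, Set.ncard_coe_finset, Finset.card_filter, Finset.sum_product_right]
  simp only [hfiber, Finset.card_filter]

theorem mul_ncard_le_incidences {V : Set (Fin 3 → ℝ)} {L : Set (Set (Fin 3 → ℝ))}
    (hV : V.Finite) (hL : L.Finite) {r : ℕ} (hrich : ∀ ℓ ∈ L, r ≤ (ℓ ∩ V).ncard) :
    r * L.ncard ≤ incidences V L := by
  rw [incidences_eq_sum_ncard hV hL, Set.ncard_eq_toFinset_card L hL, mul_comm, ← smul_eq_mul]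
  exact Finset.card_nsmul_le_sum _ _ _ fun ℓ hℓ => hrich ℓ (hL.mem_toFinset.mp hℓ)

theorem rpow_pow_of_mul_eq {x : ℝ} (hx : 0 ≤ x) {a : ℝ} {k b : ℕ} (h : a * k = b) :
    (x ^ a) ^ k = x ^ b := by
  rw [← Real.rpow_mul_natCast hx, h, Real.rpow_natCast]

theorem le_four_mul_of_le_mul_add {x K a b c d : ℝ} (h : x ≤ K * (a + b + c + d)) :
    x ≤ 4 * K * a ∨ x ≤ 4 * K * b ∨ x ≤ 4 * K * c ∨ x ≤ 4 * K * d := by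
  by_contra! hlt
  linarith [hlt.1, hlt.2.1, hlt.2.2.1, hlt.2.2.2]

theorem mul_pow_four_le_of_le_rpow {c n m r : ℝ} (hn : 0 ≤ n) (hm : 0 < m) (hr : 0 ≤ r)
    (h : r * m ≤ c * (n ^ (1 / 2 : ℝ) * m ^ (3 / 4 : ℝ))) : m * r ^ 4 ≤ c ^ 4 * n ^ 2 := by
  have h4 := pow_le_pow_left₀ (by positivity) h 4
  rw [mul_pow, mul_pow, mul_pow, rpow_pow_of_mul_eq hn (b := 2) (by norm_num),
    rpow_pow_of_mul_eq hm.le (b := 3) (by norm_num)] at h4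
  refine le_of_mul_le_mul_right ?_ (pow_pos hm 3)
  linarith

theorem pow_three_mul_sq_le_of_le_rpow {c n m q r : ℝ} (hn : 0 ≤ n) (hm : 0 < m) (hq : 0 ≤ q)
    (hr : 0 ≤ r) (h : r * m ≤ c * (n ^ (2 / 3 : ℝ) * m ^ (1 / 3 : ℝ) * q ^ (1 / 3 : ℝ))) :
    r ^ 3 * m ^ 2 ≤ c ^ 3 * n ^ 2 * q := by
  have h3 := pow_le_pow_left₀ (by positivity) h 3
  rw [mul_pow, mul_pow, mul_pow, mul_pow, rpow_pow_of_mul_eq hn (b := 2) (by norm_num),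
    rpow_pow_of_mul_eq hm.le (b := 1) (by norm_num),
    rpow_pow_of_mul_eq hq (b := 1) (by norm_num)] at h3
  refine le_of_mul_le_mul_right ?_ hm
  linarith

theorem le_sqrt_mul_of_pow_three_mul_sq_le {c K n m s q r : ℝ} (hc : 0 ≤ c) (hK : 0 ≤ K)
    (hn : 0 ≤ n) (hs : 0 ≤ s) (hr : 1 ≤ r) (hqs : q ≤ K * (s ^ 2 / r ^ 3 + s / r) + 1)
    (h : r ^ 3 * m ^ 2 ≤ c ^ 3 * n ^ 2 * q) :
    m ≤ √(c ^ 3 * (K + 1)) * (n * s / r ^ 3 + n / r) := by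
  have hr0 : 0 < r := by linarith
  set u := n * s / r ^ 3
  set v := n / r
  have hu : 0 ≤ u := by positivity
  have hv : 0 ≤ v := by positivity
  have hq : n ^ 2 * q / r ^ 3 ≤ K * u ^ 2 + K * u * v + v ^ 2 :=
    calc n ^ 2 * q / r ^ 3 ≤ n ^ 2 * (K * (s ^ 2 / r ^ 3 + s / r) + 1) / r ^ 3 := by gcongr
      _ = K * u ^ 2 + K * u * v + v ^ 2 / r := by simp only [u, v]; field_simp
      _ ≤ K * u ^ 2 + K * u * v + v ^ 2 := by gcongr; exact div_le_self (sq_nonneg v) hr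
  have hsq : m ^ 2 ≤ c ^ 3 * (K + 1) * (u + v) ^ 2 :=
    calc m ^ 2 ≤ c ^ 3 * (n ^ 2 * q / r ^ 3) := by
          rw [mul_div_assoc', le_div_iff₀ (by positivity)]; linarith
      _ ≤ c ^ 3 * (K * u ^ 2 + K * u * v + v ^ 2) := by gcongr
      _ ≤ c ^ 3 * ((K + 1) * (u + v) ^ 2) := by
          gcongr; nlinarith [mul_nonneg hu hv, mul_nonneg hK (mul_nonneg hu hv)]
      _ = c ^ 3 * (K + 1) * (u + v) ^ 2 := by ring
  calc m ≤ |m| := le_abs_self m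
    _ ≤ √(c ^ 3 * (K + 1) * (u + v) ^ 2) := Real.abs_le_sqrt hsq
    _ = √(c ^ 3 * (K + 1)) * (u + v) := by
        rw [Real.sqrt_mul (by positivity), Real.sqrt_sq (by positivity)]

noncomputable def richLinesConst (K : ℝ) : ℝ :=
  (4 * K) ^ 4 + √((4 * K) ^ 3 * (K + 1)) + 4 * K

theorem le_richLinesConst_mul_of_incidence_ineq {K n m s q r : ℝ} (hK : 0 ≤ K) (hn : 0 ≤ n)
    (hs : 0 ≤ s) (hr : 1 ≤ r) (hm : 0 ≤ m) (hmn : m ≤ n ^ 2) (hq : 0 ≤ q)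
    (hqs : q ≤ K * (s ^ 2 / r ^ 3 + s / r) + 1)
    (hinc : r * m ≤ K * (n ^ (1 / 2 : ℝ) * m ^ (3 / 4 : ℝ)
      + n ^ (2 / 3 : ℝ) * m ^ (1 / 3 : ℝ) * q ^ (1 / 3 : ℝ) + n + m)) :
    m ≤ richLinesConst K * (n ^ 2 / r ^ 4 + n * s / r ^ 3 + n / r) := by
  have hr0 : 0 < r := by linarith
  have hsqrt : 0 ≤ √((4 * K) ^ 3 * (K + 1)) := Real.sqrt_nonneg _
  have h4K : 0 ≤ 4 * K := by positivity
  have hK' : 0 ≤ richLinesConst K := by unfold richLinesConst; positivity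
  rcases hm.eq_or_lt with rfl | hm
  · positivity
  have of_le : ∀ c t : ℝ, 0 ≤ t → c ≤ richLinesConst K →
      t ≤ n ^ 2 / r ^ 4 + n * s / r ^ 3 + n / r → m ≤ c * t →
      m ≤ richLinesConst K * (n ^ 2 / r ^ 4 + n * s / r ^ 3 + n / r) :=
    fun _ _ ht hc htB hmc => hmc.trans (mul_le_mul hc htB ht hK')
  have hfirst : (4 * K) ^ 4 ≤ richLinesConst K := by unfold richLinesConst; linarith
  have hsecond : √((4 * K) ^ 3 * (K + 1)) ≤ richLinesConst K := by
    unfold richLinesConst; linarith [pow_nonneg h4K 4]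
  have hthird : 4 * K ≤ richLinesConst K := by
    unfold richLinesConst; linarith [pow_nonneg h4K 4]
  rcases le_four_mul_of_le_mul_add hinc with h | h | h | h
  · refine of_le _ (n ^ 2 / r ^ 4) (by positivity) hfirst
      (by linarith [show 0 ≤ n * s / r ^ 3 + n / r by positivity]) ?_
    rw [mul_div_assoc', le_div_iff₀ (by positivity)]
    exact mul_pow_four_le_of_le_rpow hn hm hr0.le h
  · refine of_le _ (n * s / r ^ 3 + n / r) (by positivity) hsecond
      (by linarith [show 0 ≤ n ^ 2 / r ^ 4 by positivity]) ?_
    exact le_sqrt_mul_of_pow_three_mul_sq_le h4K hK hn hs hr hqs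
      (pow_three_mul_sq_le_of_le_rpow hn hm hq hr0.le h)
  · refine of_le _ (n / r) (by positivity) hthird
      (by linarith [show 0 ≤ n ^ 2 / r ^ 4 + n * s / r ^ 3 by positivity]) ?_
    rw [mul_div_assoc', le_div_iff₀ hr0]
    linarith
  · have hr4K : r ^ 4 ≤ (4 * K) ^ 4 := pow_le_pow_left₀ hr0.le (le_of_mul_le_mul_right h hm) 4
    refine of_le _ (n ^ 2 / r ^ 4) (by positivity) hfirst
      (by linarith [show 0 ≤ n * s / r ^ 3 + n / r by positivity]) ?_
    rw [mul_div_assoc', le_div_iff₀ (by positivity)]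
    nlinarith [pow_pos hr0 4, sq_nonneg n]

/-- Assuming the Guth–Katz incidence bound in `ℝ³` and the planar rich-lines
bound, every `n`-point set `V ⊆ ℝ³` with at most `s₂` points on any 2-flat
satisfies `|L_r(V)| ≤ K'·(n²/r⁴ + n·s₂/r³ + n/r)` for a constant `K'`
depending only on `K`. -/
theorem stmt15 (K : ℝ) (hK : 0 < K) :
    ∃ K' : ℝ, ∀ (V : Set (Fin 3 → ℝ)), V.Finite →
      -- Guth–Katz incidence bound for the point set V
      (∀ (L : Set (Set (Fin 3 → ℝ))), L.Finite → (∀ ℓ ∈ L, IsLineR ℓ) →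
        ∀ q2 : ℕ, (∀ P, IsPlaneR P → ({ℓ ∈ L | ℓ ⊆ P}).ncard ≤ q2) →
          (incidences V L : ℝ) ≤
            K * ((V.ncard : ℝ) ^ ((1 : ℝ) / 2) * (L.ncard : ℝ) ^ ((3 : ℝ) / 4)
              + (V.ncard : ℝ) ^ ((2 : ℝ) / 3) * (L.ncard : ℝ) ^ ((1 : ℝ) / 3)
                  * (q2 : ℝ) ^ ((1 : ℝ) / 3)
              + (V.ncard : ℝ) + (L.ncard : ℝ))) →
      -- planar rich-lines bound for point sets contained in a 2-flat
      (∀ (W : Set (Fin 3 → ℝ)), W.Finite → (∃ P, IsPlaneR P ∧ W ⊆ P) →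
        ∀ r : ℕ, 2 ≤ r →
          ((richLinesR r W).ncard : ℝ) ≤
            K * ((W.ncard : ℝ) ^ 2 / (r : ℝ) ^ 3 + (W.ncard : ℝ) / (r : ℝ))) →
      ∀ s2 : ℕ, (∀ P, IsPlaneR P → (V ∩ P).ncard ≤ s2) →
        ∀ r : ℕ, 2 ≤ r →
          ((richLinesR r V).ncard : ℝ) ≤
            K' * ((V.ncard : ℝ) ^ 2 / (r : ℝ) ^ 4
              + (V.ncard : ℝ) * (s2 : ℝ) / (r : ℝ) ^ 3
              + (V.ncard : ℝ) / (r : ℝ)) := by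
  refine ⟨richLinesConst K, fun V hV hGK hPlanar s2 hs2 r hr => ?_⟩
  have hr1 : (1 : ℝ) ≤ r := by exact_mod_cast (by omega : 1 ≤ r)
  have hL : (richLinesR r V).Finite := richLinesR_finite hr hV
  set q2 := ⌈K * ((s2 : ℝ) ^ 2 / (r : ℝ) ^ 3 + (s2 : ℝ) / (r : ℝ))⌉₊
  have hplanar : ∀ P, IsPlaneR P → ({ℓ ∈ richLinesR r V | ℓ ⊆ P}).ncard ≤ q2 := by
    intro P hP
    have hVP : (V ∩ P).Finite := hV.subset Set.inter_subset_left
    have hs : ((V ∩ P).ncard : ℝ) ≤ s2 := by exact_mod_cast hs2 P hP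
    have hrich : ((richLinesR r (V ∩ P)).ncard : ℝ) ≤ q2 :=
      calc _ ≤ K * (((V ∩ P).ncard : ℝ) ^ 2 / (r : ℝ) ^ 3 + ((V ∩ P).ncard : ℝ) / (r : ℝ)) :=
            hPlanar (V ∩ P) hVP ⟨P, hP, Set.inter_subset_right⟩ r hr
        _ ≤ K * ((s2 : ℝ) ^ 2 / (r : ℝ) ^ 3 + (s2 : ℝ) / (r : ℝ)) := by gcongr
        _ ≤ q2 := Nat.le_ceil _
    exact (Set.ncard_le_ncard (richLinesR_sep_subset_inter r V P)
      (richLinesR_finite hr hVP)).trans (by exact_mod_cast hrich)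
  have hlow : (r : ℝ) * (richLinesR r V).ncard ≤ incidences V (richLinesR r V) := by
    exact_mod_cast mul_ncard_le_incidences hV hL fun ℓ hℓ => hℓ.2
  exact le_richLinesConst_mul_of_incidence_ineq hK.le (by positivity) (by positivity) hr1
    (by positivity) (by exact_mod_cast ncard_richLinesR_le_sq hr hV) (by positivity)
    (Nat.ceil_lt_add_one (by positivity)).le
    (hlow.trans (hGK _ hL (fun ℓ hℓ => hℓ.1) q2 hplanar))
end

section
/- Let f ∈ ℂ[x_1,...,x_d] be a polynomial of minimal total degree among all nonzero polynomials vanishing on a finite set V'' ⊆ ℂ^d, and suppose deg f ≥ 1. If f additionally vanishes identically on a set of lines L'' such that through every point v ∈ V'' there pass at least d lines of L'' with linearly independent directions, then we reach a contradiction; hence there exists a point v ∈ V'' such that the directions of all lines of L'' through v span a linear subspace of dimension at most d−1 (a 'flat' point). -/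
/-!
If no point of `V''` were flat, the directions of the lines of `L''` through each `v ∈ V''`
would span `ℂ^d`. Since `f` vanishes on a line `t ↦ v + t • b`, differentiating at `t = 0`
gives `∑ i, b i * ∂ᵢf(v) = 0`, so the whole gradient of `f` vanishes on `V''`. In
characteristic zero some `∂ᵢf` is nonzero as `deg f ≥ 1`; it vanishes on `V''` and has
smaller degree than `f`, contradicting minimality.
-/

open MvPolynomial

/-- `L` is an affine (complex) line in the module `M`. -/
def IsLine {M : Type*} [AddCommGroup M] [Module ℂ M] (L : Set M) : Prop :=
  ∃ a b : M, b ≠ 0 ∧ L = {p | ∃ t : ℂ, p = a + t • b}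

/-- The directions of the lines of the family `Ls` passing through `v`. -/
def dirsThrough (d : ℕ) (Ls : Set (Set (Fin d → ℂ))) (v : Fin d → ℂ) :
    Set (Fin d → ℂ) :=
  {b | ∃ L ∈ Ls, v ∈ L ∧ L = {p | ∃ t : ℂ, p = v + t • b}}

namespace MvPolynomial

variable {R σ : Type*}

theorem totalDegree_pderiv_lt [CommSemiring R] {p : MvPolynomial σ R}
    (hp : 0 < p.totalDegree) (i : σ) : (pderiv i p).totalDegree < p.totalDegree := by
  rw [totalDegree, Finset.sup_lt_iff (by exact hp)]
  intro m hm
  rw [mem_support_iff, coeff_pderiv] at hm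
  have hsucc := le_totalDegree (mem_support_iff.mpr (left_ne_zero_of_mul hm))
  rw [Finsupp.sum_add_index' (fun _ => rfl) (fun _ _ _ => rfl),
    Finsupp.sum_single_index rfl] at hsucc
  omega

theorem exists_pderiv_ne_zero [CommSemiring R] [NoZeroDivisors R] [CharZero R]
    {p : MvPolynomial σ R} (hp : p.totalDegree ≠ 0) : ∃ i, pderiv i p ≠ 0 := by
  classical
  obtain ⟨m, hm, i, hi⟩ : ∃ m ∈ p.support, ∃ i, m i ≠ 0 := by
    simpa [totalDegree_eq_zero_iff] using hp
  refine ⟨i, fun h => ?_⟩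
  have hcoeff := coeff_pderiv (i := i) p (m - Finsupp.single i 1)
  have hm' : m - Finsupp.single i 1 + Finsupp.single i 1 = m :=
    tsub_add_cancel_of_le (Finsupp.single_le_iff.mpr (Nat.one_le_iff_ne_zero.mpr hi))
  rw [h, hm', coeff_zero] at hcoeff
  exact mul_ne_zero (mem_support_iff.mp hm) (Nat.cast_add_one_ne_zero _) hcoeff.symm

theorem derivative_aeval [CommSemiring R] [Fintype σ] (g : σ → Polynomial R)
    (p : MvPolynomial σ R) :
    Polynomial.derivative (aeval g p) =
      ∑ i, aeval g (pderiv i p) * Polynomial.derivative (g i) := by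
  classical
  induction p using MvPolynomial.induction_on with
  | C a => simp
  | add p q hp hq => simp [hp, hq, add_mul, Finset.sum_add_distrib]
  | mul_X p i hp =>
    simp only [map_mul, aeval_X, Polynomial.derivative_mul, hp, pderiv_mul, pderiv_X, map_add,
      Finset.sum_mul, add_mul, Finset.sum_add_distrib]
    simp [Pi.single_apply, mul_right_comm]

theorem eval_aeval_polynomial [CommSemiring R] (g : σ → Polynomial R) (p : MvPolynomial σ R)
    (t : R) :
    (aeval g p).eval t = eval (fun i => (g i).eval t) p := by
  rw [← Polynomial.coe_aeval_eq_eval, comp_aeval_apply]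
  simp

theorem sum_mul_eval_pderiv_eq_zero_of_forall_eval_add_smul [CommRing R] [IsDomain R]
    [Infinite R] [Fintype σ] {f : MvPolynomial σ R} {v b : σ → R}
    (h : ∀ t : R, eval (v + t • b) f = 0) : ∑ i, b i * eval v (pderiv i f) = 0 := by
  set g : σ → Polynomial R := fun i => Polynomial.C (v i) + Polynomial.C (b i) * Polynomial.X
  have hg : ∀ t, (fun i => (g i).eval t) = v + t • b := fun t => by
    ext i
    simp only [g, Polynomial.eval_add, Polynomial.eval_mul, Polynomial.eval_C, Polynomial.eval_X,
      Pi.add_apply, Pi.smul_apply, smul_eq_mul]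
    ring
  have hline : aeval g f = 0 := Polynomial.funext fun t => by
    rw [eval_aeval_polynomial, hg, h, Polynomial.eval_zero]
  have hderiv := congrArg (fun q => (Polynomial.derivative q).eval 0) hline
  simp only [derivative_aeval, Polynomial.eval_finsetSum, Polynomial.eval_mul,
    eval_aeval_polynomial, hg, zero_smul, add_zero, map_zero, Polynomial.eval_zero] at hderiv
  simpa [g, mul_comm (b _)] using hderiv

theorem eval_pderiv_eq_zero_of_span_eq_top [CommRing R] [IsDomain R] [Infinite R] [Fintype σ]
    [DecidableEq σ] {f : MvPolynomial σ R} {v : σ → R} {S : Set (σ → R)}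
    (hS : Submodule.span R S = ⊤) (h : ∀ b ∈ S, ∀ t : R, eval (v + t • b) f = 0) (i : σ) :
    eval v (pderiv i f) = 0 := by
  set grad := Fintype.linearCombination R fun j => eval v (pderiv j f)
  have hker : Submodule.span R S ≤ LinearMap.ker grad := Submodule.span_le.mpr fun b hb => by
    simpa [grad, Fintype.linearCombination_apply] using
      sum_mul_eval_pderiv_eq_zero_of_forall_eval_add_smul (h b hb)
  simpa [grad] using hker (hS ▸ Submodule.mem_top : Pi.single i 1 ∈ Submodule.span R S)

end MvPolynomial

theorem eval_add_smul_eq_zero_of_mem_dirsThrough {d : ℕ} {Ls : Set (Set (Fin d → ℂ))}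
    {f : MvPolynomial (Fin d) ℂ} (hf : ∀ L ∈ Ls, ∀ p ∈ L, eval p f = 0) {v b : Fin d → ℂ}
    (hb : b ∈ dirsThrough d Ls v) (t : ℂ) : eval (v + t • b) f = 0 := by
  obtain ⟨L, hL, -, rfl⟩ := hb
  exact hf _ hL _ ⟨t, rfl⟩

theorem stmt19_general (d : ℕ) (V'' : Set (Fin d → ℂ))
    (L'' : Set (Set (Fin d → ℂ)))
    (f : MvPolynomial (Fin d) ℂ) (hdeg : 1 ≤ f.totalDegree)
    (hmin : ∀ g : MvPolynomial (Fin d) ℂ, g ≠ 0 → (∀ v ∈ V'', eval v g = 0) →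
      f.totalDegree ≤ g.totalDegree)
    (hvanL : ∀ L ∈ L'', ∀ p ∈ L, eval p f = 0) :
    ∃ v ∈ V'', Module.finrank ℂ
      (Submodule.span ℂ (dirsThrough d L'' v)) ≤ d - 1 := by
  by_contra! hflat
  have hspan : ∀ v ∈ V'', Submodule.span ℂ (dirsThrough d L'' v) = ⊤ := fun v hv => by
    have hle := Submodule.finrank_le (Submodule.span ℂ (dirsThrough d L'' v))
    have hlt := hflat v hv
    refine Submodule.eq_top_of_finrank_eq ?_
    rw [Module.finrank_fin_fun] at hle ⊢
    omega
  have hgrad : ∀ v ∈ V'', ∀ i, eval v (pderiv i f) = 0 := fun v hv =>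
    eval_pderiv_eq_zero_of_span_eq_top (hspan v hv) fun _ hb =>
      eval_add_smul_eq_zero_of_mem_dirsThrough hvanL hb
  obtain ⟨i, hi⟩ := exists_pderiv_ne_zero (by omega : f.totalDegree ≠ 0)
  exact (totalDegree_pderiv_lt hdeg i).not_ge (hmin _ hi fun v hv => hgrad v hv i)

/-- If `f` is a nonzero polynomial of minimal degree (≥ 1) vanishing on a finite
nonempty set `V''`, and `f` vanishes identically on every line of a finite
family `L''` of lines, then some point of `V''` is flat: the directions of the
lines of `L''` through it span a subspace of dimension at most `d − 1`. -/
theorem stmt19 (d : ℕ) (V'' : Set (Fin d → ℂ)) (hVfin : V''.Finite)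
    (hVne : V''.Nonempty)
    (L'' : Set (Set (Fin d → ℂ))) (hLfin : L''.Finite)
    (hline : ∀ L ∈ L'', IsLine L)
    (f : MvPolynomial (Fin d) ℂ) (hf : f ≠ 0) (hdeg : 1 ≤ f.totalDegree)
    (hvanV : ∀ v ∈ V'', eval v f = 0)
    (hmin : ∀ g : MvPolynomial (Fin d) ℂ, g ≠ 0 → (∀ v ∈ V'', eval v g = 0) →
      f.totalDegree ≤ g.totalDegree)
    (hvanL : ∀ L ∈ L'', ∀ p ∈ L, eval p f = 0) :
    ∃ v ∈ V'', Module.finrank ℂ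
      (Submodule.span ℂ (dirsThrough d L'' v)) ≤ d - 1 :=
  stmt19_general d V'' L'' f hdeg hmin hvanL
end
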